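/- arXiv:2507.23008 — 2 statements merged into one kernel-verified Lean document; each statement's English description precedes it below -/
import Mathlib

section
/- Let n, b be positive integers, let g : 𝔽₂^[b] → 𝔽₂ be a gadget, let δ ≥ 0 satisfy |ĝ(S)| ≤ δ for all S ⊆ [b], and set E = (1+2δ)^n − 1. Let A ⊆ 𝔽₂^{[n]×[b]} be a nonempty safe affine subspace and let z ∈ 𝔽₂^[n]. Then the fraction of points of A mapped to z satisfies |#(A ∩ G⁻¹(z))/#A − 2^{−n}| ≤ E · 2^{−n} (as real numbers). -/
open Finset

noncomputable section

abbrev F2 : Type := ZMod 2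

/-- Restriction of `x` to block `i`. -/
def blk {ι : Type*} {b : ℕ} (x : (ι × Fin b) → F2) (i : ι) : Fin b → F2 := fun j => x (i, j)

/-- The lifted gadget map `G(x)_i = g(x(i))`. -/
def liftG {n b : ℕ} (g : (Fin b → F2) → F2) (x : (Fin n × Fin b) → F2) : Fin n → F2 :=
  fun i => g (blk x i)

/-- Fourier coefficient of `h : 𝔽₂^J → 𝔽₂` at `T ⊆ J`. -/
def hatFC {J : Type*} [Fintype J] [DecidableEq J] (h : (J → F2) → F2) (T : Finset J) : ℝ :=
  ((2 : ℝ) ^ (Fintype.card J))⁻¹ *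
    ∑ x : J → F2, (-1 : ℝ) ^ ((h x).val + ∑ j ∈ T, (x j).val)

/-- A set of vectors of the lifted space (blocks indexed by `ι`) is safe if any `k`
linearly independent vectors in its span have supports meeting at least `k` blocks. -/
def IsSafeSet {ι : Type*} {b : ℕ} (Vs : Set ((ι × Fin b) → F2)) : Prop :=
  ∀ (k : ℕ) (w : Fin k → ((ι × Fin b) → F2)),
    (∀ m, w m ∈ Submodule.span F2 Vs) → LinearIndependent F2 w →
    k ≤ ({i : ι | ∃ m j, w m (i, j) ≠ 0} : Set ι).ncard

/-- The annihilator `L(A)` of an affine subspace: all linear forms vanishing on its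
direction. -/
def annih {ι : Type*} [Fintype ι] {b : ℕ}
    (A : AffineSubspace F2 ((ι × Fin b) → F2)) : Set ((ι × Fin b) → F2) :=
  {l | ∀ w ∈ A.direction, ∑ p : ι × Fin b, l p * w p = 0}

/-- A (nonempty) affine subspace is safe if its annihilator is safe. -/
def IsSafeAffine {ι : Type*} [Fintype ι] {b : ℕ}
    (A : AffineSubspace F2 ((ι × Fin b) → F2)) : Prop :=
  IsSafeSet (annih A)

/-- Codimension of an affine subspace of the lifted space. -/
def codim {ι : Type*} [Fintype ι] {b : ℕ}
    (A : AffineSubspace F2 ((ι × Fin b) → F2)) : ℕ :=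
  Fintype.card ι * b - Module.finrank F2 A.direction

/-- Standard basis vector at coordinate `p`. -/
def stdv {ι : Type*} [DecidableEq ι] {b : ℕ} (p : ι × Fin b) : (ι × Fin b) → F2 :=
  fun q => if q = p then 1 else 0

/-- A set of blocks `S` is acceptable for a subspace `W` if one can pick one coordinate
in each block of `S` so that no nonzero 𝔽₂-linear combination of the corresponding
standard basis vectors lies in `W`. -/
def AcceptableFor {ι : Type*} [DecidableEq ι] {b : ℕ}
    (W : Submodule F2 ((ι × Fin b) → F2)) (S : Finset ι) : Prop :=
  ∃ c : ι → Fin b, ∀ T ⊆ S, T.Nonempty → (∑ s ∈ T, stdv (s, c s)) ∉ W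

/-- `âcl(A)`: the maximum size of a set of blocks acceptable for the direction of `A`. -/
def acl {ι : Type*} [Fintype ι] [DecidableEq ι] {b : ℕ}
    (A : AffineSubspace F2 ((ι × Fin b) → F2)) : ℕ :=
  sSup {k | ∃ S : Finset ι, S.card = k ∧ AcceptableFor A.direction S}

/-- `v[∖T]`: restriction of `v` to the coordinates of blocks outside `T`. -/
def restrictOut {n b : ℕ} (T : Finset (Fin n)) (v : (Fin n × Fin b) → F2) :
    ({i : Fin n // i ∉ T} × Fin b) → F2 :=
  fun p => v (p.1.1, p.2)

/-- `T` is a deviolator for `A` if `{ℓ[∖T] : ℓ ∈ L(A)}` is safe. -/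
def IsDeviolator {n b : ℕ} (A : AffineSubspace F2 ((Fin n × Fin b) → F2))
    (T : Finset (Fin n)) : Prop :=
  IsSafeSet (restrictOut T '' annih A)

/-- A closure of `A` is a deviolator of minimum cardinality. -/
def IsClosure {n b : ℕ} (A : AffineSubspace F2 ((Fin n × Fin b) → F2))
    (T : Finset (Fin n)) : Prop :=
  IsDeviolator A T ∧ ∀ T', IsDeviolator A T' → T.card ≤ T'.card

/-- `C_y`: the set of points agreeing with `y` on all coordinates of blocks in `T`. -/
def cube {n b : ℕ} (T : Finset (Fin n)) (y : ({i : Fin n // i ∈ T} × Fin b) → F2) :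
    Set ((Fin n × Fin b) → F2) :=
  {x | ∀ (i : Fin n) (hi : i ∈ T) (j : Fin b), x (i, j) = y (⟨i, hi⟩, j)}

/-- The point of the lifted space equal to `y` on the blocks of `T` and to `x` elsewhere. -/
def glue {n b : ℕ} (T : Finset (Fin n)) (y : ({i : Fin n // i ∈ T} × Fin b) → F2)
    (x : ({i : Fin n // i ∉ T} × Fin b) → F2) : (Fin n × Fin b) → F2 :=
  fun p => if h : p.1 ∈ T then y (⟨p.1, h⟩, p.2) else x (⟨p.1, h⟩, p.2)

/-! Write the indicator of `G(x) = z` as the average over `s ∈ 𝔽₂ⁿ` of the characters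
`(-1)^⟨s, G(x) + z⟩`; the term `s = 0` gives the main term `2⁻ⁿ`. Expanding each factor
`(-1)^{g(x(i))}` with `s i ≠ 0` in the Walsh basis writes `(-1)^⟨s, G(x)⟩` as a combination
of characters `(-1)^⟨ℓ, x⟩` with `ℓ` supported on the blocks where `s ≠ 0` and coefficients
of size at most `δ^|s|`. Summed over `A`, such a character vanishes unless `ℓ ∈ L(A)`, and by
safety the `ℓ ∈ L(A)` supported on `|s|` blocks span a space of dimension at most `|s|`, so
at most `2^|s|` of them survive. Hence the `s`-th term is at most `(2δ)^|s|`, and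
`∑_{s ≠ 0} (2δ)^|s| = (1 + 2δ)ⁿ - 1`. -/
lemma sum_univ_F2 {M : Type*} [AddCommMonoid M] (f : F2 → M) : ∑ a, f a = f 0 + f 1 := by
  rw [show (univ : Finset F2) = {0, 1} from rfl, sum_pair (by decide)]

lemma eq_zero_or_eq_one_F2 : ∀ a : F2, a = 0 ∨ a = 1 := by decide

def signChar : AddChar F2 ℝ where
  toFun a := (-1) ^ a.val
  map_zero_eq_one' := pow_zero _
  map_add_eq_mul' a c := by
    rw [ZMod.val_add, ← neg_one_pow_eq_pow_mod_two, pow_add]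

lemma signChar_apply (a : F2) : signChar a = (-1) ^ a.val := rfl

@[simp] lemma signChar_one : signChar 1 = -1 := pow_one _

@[simp] lemma abs_signChar (a : F2) : |signChar a| = 1 := by
  simp [signChar_apply]

lemma signChar_sum {α : Type*} (s : Finset α) (f : α → F2) :
    signChar (∑ i ∈ s, f i) = ∏ i ∈ s, signChar (f i) := by
  induction s using Finset.cons_induction with
  | empty => simp
  | cons a s ha ih => rw [sum_cons, prod_cons, AddChar.map_add_eq_mul, ih]

lemma abs_sum_signChar_le {α : Type*} (t : Finset α) (f : α → F2) :
    |∑ x ∈ t, signChar (f x)| ≤ #t :=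
  (abs_sum_le_sum_abs _ _).trans (by simp)

lemma sum_signChar_mul (c : F2) : ∑ a, signChar (a * c) = if c = 0 then 2 else 0 := by
  rcases eq_zero_or_eq_one_F2 c with rfl | rfl <;> norm_num [sum_univ_F2]

lemma add_eq_zero_iff_eq_F2 {J : Type*} (x y : J → F2) : x + y = 0 ↔ x = y := by
  simp only [funext_iff, Pi.add_apply, Pi.zero_apply, CharTwo.add_eq_zero]

section Characters
variable {J : Type*} [Fintype J] [DecidableEq J]

lemma sum_signChar_dotProduct (v : J → F2) :
    ∑ s : J → F2, signChar (s ⬝ᵥ v) = if v = 0 then 2 ^ Fintype.card J else 0 := by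
  simp only [dotProduct, signChar_sum]
  rw [← Fintype.prod_sum fun i (a : F2) => signChar (a * v i)]
  simp only [sum_signChar_mul, Fintype.prod_ite_zero, funext_iff, prod_const, card_univ,
    Pi.zero_apply]

lemma sum_signChar_dotProduct_eq_zero (A : AffineSubspace F2 (J → F2)) [DecidablePred (· ∈ A)]
    {ℓ w : J → F2} (hw : w ∈ A.direction) (hℓw : ℓ ⬝ᵥ w ≠ 0) :
    ∑ x ∈ univ.filter (· ∈ A), signChar (ℓ ⬝ᵥ x) = 0 := by
  have hℓw1 : ℓ ⬝ᵥ w = 1 := (eq_zero_or_eq_one_F2 _).resolve_left hℓw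
  refine sum_involution (fun x _ => x + w) (fun x _ => ?_) (fun x _ _ hx => ?_)
    (fun x hx => ?_) (fun x _ => ?_)
  · rw [dotProduct_add, AddChar.map_add_eq_mul, hℓw1, signChar_one]
    ring
  · rw [add_eq_left] at hx
    exact hℓw (by rw [hx, dotProduct_zero])
  · simp only [mem_filter, mem_univ, true_and] at hx ⊢
    simpa [vadd_eq_add, add_comm] using AffineSubspace.vadd_mem_of_mem_direction hw hx
  · rw [add_assoc, (add_eq_zero_iff_eq_F2 w w).2 rfl, add_zero]

lemma card_filter_eq_sum_signChar {α : Type*} (t : Finset α) (F : α → J → F2) (z : J → F2)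
    [DecidablePred fun x => F x = z] :
    (#(t.filter fun x => F x = z) : ℝ)
      = (2 ^ Fintype.card J)⁻¹ * ∑ s, signChar (s ⬝ᵥ z) * ∑ x ∈ t, signChar (s ⬝ᵥ F x) := by
  calc (#(t.filter fun x => F x = z) : ℝ)
      = ∑ x ∈ t, (2 ^ Fintype.card J)⁻¹ * ∑ s, signChar (s ⬝ᵥ (F x + z)) := by
        rw [natCast_card_filter]
        refine sum_congr rfl fun x _ => ?_
        simp only [sum_signChar_dotProduct, add_eq_zero_iff_eq_F2]
        split_ifs <;> simp
    _ = _ := by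
        simp_rw [dotProduct_add, AddChar.map_add_eq_mul, ← mul_sum, mul_comm (signChar (_ ⬝ᵥ F _))]
        rw [sum_comm]
        simp_rw [mul_sum]

lemma sum_pow_hammingNorm {R : Type*} [CommSemiring R] (c : R) :
    ∑ s : J → F2, c ^ hammingNorm s = (1 + c) ^ Fintype.card J := by
  simp_rw [hammingNorm, ← prod_const, prod_filter]
  rw [← Fintype.prod_sum fun i (a : F2) => if a ≠ 0 then c else 1, prod_const, card_univ,
    sum_univ_F2]
  simp

lemma sum_erase_zero_pow_hammingNorm {R : Type*} [CommRing R] (c : R) :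
    ∑ s ∈ univ.erase (0 : J → F2), c ^ hammingNorm s = (1 + c) ^ Fintype.card J - 1 := by
  rw [← sum_pow_hammingNorm, ← add_sum_erase _ _ (mem_univ 0), hammingNorm_zero, pow_zero,
    add_sub_cancel_left]

def walshCoeff (h : (J → F2) → F2) (u : J → F2) : ℝ :=
  (2 ^ Fintype.card J)⁻¹ * ∑ x, signChar (h x + u ⬝ᵥ x)

lemma signChar_eq_sum_walshCoeff (h : (J → F2) → F2) (y : J → F2) :
    signChar (h y) = ∑ u, walshCoeff h u * signChar (u ⬝ᵥ y) := by
  calc signChar (h y)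
      = (2 ^ Fintype.card J)⁻¹ *
          ∑ x, signChar (h x) * (if x + y = 0 then 2 ^ Fintype.card J else 0) := by
        simp_rw [add_eq_zero_iff_eq_F2, mul_ite, mul_zero, sum_ite_eq', mem_univ, if_true]
        field_simp
    _ = (2 ^ Fintype.card J)⁻¹ *
          ∑ x, ∑ u, signChar (h x + u ⬝ᵥ x) * signChar (u ⬝ᵥ y) := by
        simp_rw [← sum_signChar_dotProduct, mul_sum, dotProduct_add, AddChar.map_add_eq_mul,
          mul_assoc]
    _ = ∑ u, walshCoeff h u * signChar (u ⬝ᵥ y) := by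
        simp_rw [walshCoeff, mul_sum, sum_mul, mul_assoc]
        exact sum_comm

lemma hatFC_eq_walshCoeff (h : (J → F2) → F2) (S : Finset J) :
    hatFC h S = walshCoeff h fun j => if j ∈ S then 1 else 0 := by
  have hind : ∀ x : J → F2, (fun j => if j ∈ S then 1 else 0) ⬝ᵥ x = ∑ j ∈ S, x j := fun x => by
    simp only [dotProduct, ite_mul, one_mul, zero_mul, sum_ite_mem, univ_inter]
  simp only [hatFC, walshCoeff, hind, AddChar.map_add_eq_mul, signChar_sum]
  simp only [signChar_apply, pow_add, prod_pow_eq_pow_sum]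

lemma abs_walshCoeff_le {h : (J → F2) → F2} {δ : ℝ} (hδ : ∀ S, |hatFC h S| ≤ δ) (u : J → F2) :
    |walshCoeff h u| ≤ δ := by
  have hu : u = fun j => if j ∈ univ.filter (u · ≠ 0) then 1 else 0 := funext fun j => by
    rcases eq_zero_or_eq_one_F2 (u j) with h | h <;> simp [h]
  rw [hu, ← hatFC_eq_walshCoeff]
  exact hδ _

lemma walshCoeff_zero (u : J → F2) : walshCoeff (fun _ => 0) u = if u = 0 then 1 else 0 := by
  simp_rw [walshCoeff, zero_add, dotProduct_comm u, sum_signChar_dotProduct]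
  split_ifs <;> simp

end Characters

section Blocks
variable {ι : Type*} {b : ℕ}

def blockSupported (K : Finset ι) : Submodule F2 ((ι × Fin b) → F2) :=
  Submodule.pi {p | p.1 ∉ K} fun _ => ⊥

lemma mem_blockSupported {K : Finset ι} {ℓ : (ι × Fin b) → F2} :
    ℓ ∈ blockSupported K ↔ ∀ p : ι × Fin b, p.1 ∉ K → ℓ p = 0 := by
  simp [blockSupported, Submodule.mem_pi]

variable [Fintype ι] {V : Set ((ι × Fin b) → F2)}

lemma IsSafeSet.finrank_le (hV : IsSafeSet V) (K : Finset ι) :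
    Module.finrank F2 ↥(Submodule.span F2 V ⊓ blockSupported K) ≤ #K := by
  set W := Submodule.span F2 V ⊓ blockSupported K
  let B := Module.finBasis F2 W
  have hblocks : {i : ι | ∃ m j, (B m : (ι × Fin b) → F2) (i, j) ≠ 0} ⊆ K := by
    rintro i ⟨m, j, hm⟩
    by_contra hi
    exact hm (mem_blockSupported.1 (B m).2.2 (i, j) hi)
  calc Module.finrank F2 W
      ≤ {i : ι | ∃ m j, (B m : (ι × Fin b) → F2) (i, j) ≠ 0}.ncard :=
        hV _ _ (fun m => (B m).2.1) (B.linearIndependent.map' W.subtype W.ker_subtype)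
    _ ≤ (K : Set ι).ncard := Set.ncard_le_ncard hblocks K.finite_toSet
    _ = #K := Set.ncard_coe_finset K

lemma IsSafeSet.card_le (hV : IsSafeSet V) {K : Finset ι} {T : Finset ((ι × Fin b) → F2)}
    (hT : ∀ ℓ ∈ T, ℓ ∈ V ∧ ℓ ∈ blockSupported K) : #T ≤ 2 ^ #K := by
  classical
  set W := Submodule.span F2 V ⊓ blockSupported K
  calc #T ≤ #(univ.filter (· ∈ W)) := card_le_card fun ℓ hℓ => by
        simpa [W] using ⟨Submodule.subset_span (hT ℓ hℓ).1, (hT ℓ hℓ).2⟩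
    _ = 2 ^ Module.finrank F2 W := by
        rw [← Fintype.card_subtype (· ∈ W), Module.card_eq_pow_finrank (K := F2) (V := W),
          ZMod.card]
    _ ≤ 2 ^ #K := Nat.pow_le_pow_right two_pos (hV.finrank_le K)

end Blocks

section Lifted
variable {n b : ℕ}

/-- For `s i = 0` the `i`-th factor is the Walsh coefficient of the zero function, i.e. the
indicator of `blk ℓ i = 0`. -/
def blockCoeff (g : (Fin b → F2) → F2) (s : Fin n → F2) (ℓ : (Fin n × Fin b) → F2) : ℝ :=
  ∏ i, walshCoeff (fun y => s i * g y) (blk ℓ i)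

lemma signChar_dotProduct_liftG (g : (Fin b → F2) → F2) (s : Fin n → F2)
    (x : (Fin n × Fin b) → F2) :
    signChar (s ⬝ᵥ liftG g x) = ∑ ℓ, blockCoeff g s ℓ * signChar (ℓ ⬝ᵥ x) := by
  calc signChar (s ⬝ᵥ liftG g x)
      = ∏ i, ∑ u, walshCoeff (fun y => s i * g y) u * signChar (u ⬝ᵥ blk x i) := by
        rw [dotProduct, signChar_sum]
        exact prod_congr rfl fun i _ => signChar_eq_sum_walshCoeff (fun y => s i * g y) (blk x i)
    _ = ∑ U : Fin n → Fin b → F2,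
          ∏ i, walshCoeff (fun y => s i * g y) (U i) * signChar (U i ⬝ᵥ blk x i) :=
        Fintype.prod_sum _
    _ = ∑ ℓ, blockCoeff g s ℓ * signChar (ℓ ⬝ᵥ x) := by
        rw [← (Equiv.curry (Fin n) (Fin b) F2).sum_comp]
        refine sum_congr rfl fun ℓ _ => ?_
        rw [prod_mul_distrib, ← signChar_sum, blockCoeff]
        simp only [dotProduct, Fintype.sum_prod_type]
        rfl

lemma blockCoeff_eq_zero {g : (Fin b → F2) → F2} {s : Fin n → F2} {ℓ : (Fin n × Fin b) → F2}
    (hℓ : ℓ ∉ blockSupported (univ.filter (s · ≠ 0))) : blockCoeff g s ℓ = 0 := by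
  obtain ⟨⟨i, j⟩, hi, hℓij⟩ : ∃ p : Fin n × Fin b, s p.1 = 0 ∧ ℓ p ≠ 0 := by
    simpa [mem_blockSupported] using hℓ
  have hblk : blk ℓ i ≠ 0 := fun h => hℓij (congrFun h j)
  refine prod_eq_zero (mem_univ i) ?_
  simp only [hi, zero_mul, walshCoeff_zero, hblk, if_false]

lemma abs_blockCoeff_le {g : (Fin b → F2) → F2} {δ : ℝ} (hδ : ∀ S, |hatFC g S| ≤ δ)
    (s : Fin n → F2) (ℓ : (Fin n × Fin b) → F2) :
    |blockCoeff g s ℓ| ≤ δ ^ hammingNorm s := by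
  have hfactor : ∀ i, |walshCoeff (fun y => s i * g y) (blk ℓ i)| ≤ if s i ≠ 0 then δ else 1 := by
    intro i
    rcases eq_zero_or_eq_one_F2 (s i) with h | h
    · simp only [h, zero_mul, walshCoeff_zero, ne_eq, not_true_eq_false, if_false]
      split_ifs <;> simp
    · simpa [h] using abs_walshCoeff_le hδ (blk ℓ i)
  calc |blockCoeff g s ℓ| ≤ ∏ i, if s i ≠ 0 then δ else 1 := by
        rw [blockCoeff, abs_prod]
        exact prod_le_prod (fun i _ => abs_nonneg _) fun i _ => hfactor i
    _ = δ ^ hammingNorm s := by rw [← prod_filter, prod_const, hammingNorm]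

lemma abs_sum_signChar_dotProduct_liftG_le {g : (Fin b → F2) → F2} {δ : ℝ} (hδ0 : 0 ≤ δ)
    (hδ : ∀ S, |hatFC g S| ≤ δ) {A : AffineSubspace F2 ((Fin n × Fin b) → F2)}
    [DecidablePred (· ∈ A)] (hA : IsSafeAffine A) (s : Fin n → F2) :
    |∑ x ∈ univ.filter (· ∈ A), signChar (s ⬝ᵥ liftG g x)|
      ≤ (2 * δ) ^ hammingNorm s * #(univ.filter (· ∈ A)) := by
  classical
  set t := univ.filter (· ∈ A)
  set good := univ.filter fun ℓ => ℓ ∈ annih A ∧ ℓ ∈ blockSupported (univ.filter (s · ≠ 0))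
  have hterm : ∀ ℓ, |blockCoeff g s ℓ * ∑ x ∈ t, signChar (ℓ ⬝ᵥ x)|
      ≤ if ℓ ∈ good then δ ^ hammingNorm s * #t else 0 := by
    intro ℓ
    split_ifs with hℓ
    · rw [abs_mul]
      exact mul_le_mul (abs_blockCoeff_le hδ s ℓ) (abs_sum_signChar_le t _) (abs_nonneg _)
        (pow_nonneg hδ0 _)
    · have : blockCoeff g s ℓ = 0 ∨ ∑ x ∈ t, signChar (ℓ ⬝ᵥ x) = 0 := by
        simp only [good, mem_filter, mem_univ, true_and, not_and_or] at hℓ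
        refine hℓ.symm.imp blockCoeff_eq_zero fun h => ?_
        obtain ⟨w, hw, hℓw⟩ : ∃ w ∈ A.direction, ℓ ⬝ᵥ w ≠ 0 := by simpa [annih, dotProduct] using h
        exact sum_signChar_dotProduct_eq_zero A hw hℓw
      rcases this with h | h <;> simp [h]
  calc |∑ x ∈ t, signChar (s ⬝ᵥ liftG g x)|
      = |∑ ℓ, blockCoeff g s ℓ * ∑ x ∈ t, signChar (ℓ ⬝ᵥ x)| := by
        simp_rw [signChar_dotProduct_liftG, mul_sum]
        rw [sum_comm]
    _ ≤ ∑ ℓ, if ℓ ∈ good then δ ^ hammingNorm s * #t else 0 :=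
        (abs_sum_le_sum_abs _ _).trans (sum_le_sum fun ℓ _ => hterm ℓ)
    _ = #good * (δ ^ hammingNorm s * #t) := by
        rw [sum_ite_mem, univ_inter, sum_const, nsmul_eq_mul]
    _ ≤ 2 ^ hammingNorm s * (δ ^ hammingNorm s * #t) := by
        gcongr
        exact_mod_cast hA.card_le fun ℓ hℓ => (mem_filter.1 hℓ).2
    _ = (2 * δ) ^ hammingNorm s * #t := by ring

end Lifted

theorem stmt1_general {n b : ℕ}
    (g : (Fin b → F2) → F2) (δ : ℝ) (hδ0 : 0 ≤ δ)
    (hδ : ∀ S : Finset (Fin b), |hatFC g S| ≤ δ)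
    (E : ℝ) (hE : E = (1 + 2 * δ) ^ n - 1)
    (A : AffineSubspace F2 ((Fin n × Fin b) → F2))
    (hAne : (A : Set ((Fin n × Fin b) → F2)).Nonempty)
    (hAsafe : IsSafeAffine A)
    (z : Fin n → F2) :
    abs (((((A : Set ((Fin n × Fin b) → F2)) ∩ {x | liftG g x = z}).ncard : ℝ)
          / ((A : Set ((Fin n × Fin b) → F2)).ncard : ℝ))
        - ((2 : ℝ) ^ n)⁻¹)
      ≤ E * ((2 : ℝ) ^ n)⁻¹ := by
  classical
  set t := univ.filter (· ∈ A)
  have hA : (A : Set ((Fin n × Fin b) → F2)).ncard = #t := by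
    rw [← Set.ncard_coe_finset]; congr 1; ext; simp [t]
  have hAz : ((A : Set ((Fin n × Fin b) → F2)) ∩ {x | liftG g x = z}).ncard
      = #(t.filter fun x => liftG g x = z) := by
    rw [← Set.ncard_coe_finset]; congr 1; ext; simp [t]
  have ht : (0 : ℝ) < #t := by
    obtain ⟨x, hx⟩ := hAne
    exact_mod_cast card_pos.2 ⟨x, by simpa [t] using hx⟩
  rw [hAz, hA, card_filter_eq_sum_signChar, Fintype.card_fin]
  set T : (Fin n → F2) → ℝ := fun s => signChar (s ⬝ᵥ z) * ∑ x ∈ t, signChar (s ⬝ᵥ liftG g x)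
  have hT0 : T 0 = #t := by simp [T]
  have hR : |∑ s ∈ univ.erase 0, T s| ≤ E * #t := by
    have hE' := sum_erase_zero_pow_hammingNorm (J := Fin n) (2 * δ)
    rw [Fintype.card_fin, ← hE] at hE'
    rw [← hE', sum_mul]
    refine (abs_sum_le_sum_abs _ _).trans (sum_le_sum fun s _ => ?_)
    simpa [T, abs_mul] using abs_sum_signChar_dotProduct_liftG_le hδ0 hδ hAsafe s
  have hsplit : (2 ^ n)⁻¹ * (∑ s, T s) / #t - (2 ^ n)⁻¹
      = (∑ s ∈ univ.erase 0, T s) / #t * (2 ^ n)⁻¹ := by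
    rw [← add_sum_erase _ _ (mem_univ 0), hT0]
    field_simp
    ring
  rw [hsplit, abs_mul, abs_div, abs_of_pos ht, abs_of_pos (by positivity : (0 : ℝ) < (2 ^ n)⁻¹)]
  exact mul_le_mul_of_nonneg_right ((div_le_iff₀ ht).2 hR) (by positivity)

/-- the fraction of points of a safe affine subspace mapped to any
target `z` is close to `2^{-n}` (Corollary `equidistribution`). -/
theorem stmt1 {n b : ℕ} (hn : 0 < n) (hb : 0 < b)
    (g : (Fin b → F2) → F2) (δ : ℝ) (hδ0 : 0 ≤ δ)
    (hδ : ∀ S : Finset (Fin b), |hatFC g S| ≤ δ)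
    (E : ℝ) (hE : E = (1 + 2 * δ) ^ n - 1)
    (A : AffineSubspace F2 ((Fin n × Fin b) → F2))
    (hAne : (A : Set ((Fin n × Fin b) → F2)).Nonempty)
    (hAsafe : IsSafeAffine A)
    (z : Fin n → F2) :
    abs (((((A : Set ((Fin n × Fin b) → F2)) ∩ {x | liftG g x = z}).ncard : ℝ)
          / ((A : Set ((Fin n × Fin b) → F2)).ncard : ℝ))
        - ((2 : ℝ) ^ n)⁻¹)
      ≤ E * ((2 : ℝ) ^ n)⁻¹ :=
  stmt1_general g δ hδ0 hδ E hE A hAne hAsafe z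
end
end

section
/- Let n, b be positive integers, let g : 𝔽₂^[b] → 𝔽₂ be a gadget, and let δ ≥ 0 satisfy |ĝ(S')| ≤ δ for all S' ⊆ [b]. Let S ⊆ [n] and let ℓ ∈ 𝔽₂^{[n]×[b]} be a vector whose support is contained in the union of the blocks of S. Then |2^{−nb} · Σ_{x ∈ 𝔽₂^{[n]×[b]}} (−1)^{Σ_{i∈S} g(x(i)) + ⟨ℓ,x⟩}| ≤ δ^{|S|}, where each term in the exponent is read as an integer in {0,1} (the inner product ⟨ℓ,x⟩ being computed in 𝔽₂). -/
open Finset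

noncomputable section

def chi (a : F2) : ℝ := (-1 : ℝ) ^ a.val

lemma chi_add (a c : F2) : chi (a + c) = chi a * chi c := by
  unfold chi
  rw [← pow_add, ZMod.val_add, ← neg_one_pow_eq_pow_mod_two]

lemma chi_sum {α : Type*} (s : Finset α) (f : α → F2) :
    chi (∑ a ∈ s, f a) = ∏ a ∈ s, chi (f a) := by
  induction s using Finset.cons_induction with
  | empty => simp [chi]
  | cons a s ha ih => rw [Finset.sum_cons, Finset.prod_cons, chi_add, ih]
lemma f2_cases (a : F2) : a = 0 ∨ a = 1 := by revert a; decide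


/-- the exponential sum is small when the support of the linear form lies
inside the blocks of `S` (Claim `discrepancy`). -/
theorem stmt8 {n b : ℕ} (hn : 0 < n) (hb : 0 < b)
    (g : (Fin b → F2) → F2) (δ : ℝ) (hδ0 : 0 ≤ δ)
    (hδ : ∀ S' : Finset (Fin b), |hatFC g S'| ≤ δ)
    (S : Finset (Fin n)) (l : (Fin n × Fin b) → F2)
    (hsupp : ∀ (i : Fin n) (j : Fin b), l (i, j) ≠ 0 → i ∈ S) :
    abs (((2 : ℝ) ^ (n * b))⁻¹ * ∑ x : (Fin n × Fin b) → F2,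
        (-1 : ℝ) ^ ((∑ i ∈ S, (g (blk x i)).val)
          + (∑ p : Fin n × Fin b, l p * x p).val))
      ≤ δ ^ S.card := by
  classical
  set T : Fin n → Finset (Fin b) := fun i => univ.filter (fun j => l (i, j) ≠ 0) with hT
  set F : Fin n → (Fin b → F2) → ℝ :=
    fun i z => (if i ∈ S then (-1 : ℝ) ^ ((g z).val) else 1) * ∏ j ∈ T i, chi (z j) with hF
  have key : ∀ x : (Fin n × Fin b) → F2,
      ((-1 : ℝ) ^ ((∑ i ∈ S, (g (blk x i)).val) + (∑ p : Fin n × Fin b, l p * x p).val))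
      = ∏ i : Fin n, F i (blk x i) := by
    intro x
    rw [pow_add]
    have h1 : ((-1 : ℝ) ^ (∑ i ∈ S, (g (blk x i)).val))
        = ∏ i : Fin n, (if i ∈ S then (-1 : ℝ) ^ ((g (blk x i)).val) else 1) := by
      rw [Finset.prod_ite_mem, Finset.univ_inter, Finset.prod_pow_eq_pow_sum]
    have h2 : ((-1 : ℝ) ^ ((∑ p : Fin n × Fin b, l p * x p).val))
        = ∏ i : Fin n, ∏ j ∈ T i, chi (x (i, j)) := by
      show chi _ = _
      rw [chi_sum, Fintype.prod_prod_type]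
      refine Finset.prod_congr rfl fun i _ => ?_
      have : ∀ j : Fin b, chi (l (i, j) * x (i, j)) = if j ∈ T i then chi (x (i, j)) else 1 := by
        intro j
        rcases f2_cases (l (i, j)) with h | h
        · simp [hT, h, chi]
        · simp [hT, h, chi]
      rw [Finset.prod_congr rfl fun j _ => this j, Finset.prod_ite_mem, Finset.univ_inter]
    rw [h1, h2, ← Finset.prod_mul_distrib]
    rfl
  have step2 : (∑ x : (Fin n × Fin b) → F2,
      (-1 : ℝ) ^ ((∑ i ∈ S, (g (blk x i)).val) + (∑ p : Fin n × Fin b, l p * x p).val))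
      = ∏ i : Fin n, ∑ z : Fin b → F2, F i z := by
    rw [Finset.sum_congr rfl fun x _ => key x, Fintype.prod_sum F]
    exact Fintype.sum_equiv (Equiv.curry (Fin n) (Fin b) F2) _ _ (fun x => rfl)
  have hbound : ∀ i : Fin n,
      |∑ z : Fin b → F2, F i z| ≤ (2 : ℝ) ^ b * (if i ∈ S then δ else 1) := by
    intro i
    by_cases hi : i ∈ S
    · have : (∑ z : Fin b → F2, F i z) = (2 : ℝ) ^ b * hatFC g (T i) := by
        rw [hatFC]
        rw [Fintype.card_fin, ← mul_assoc, mul_inv_cancel₀ (by positivity), one_mul]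
        refine Finset.sum_congr rfl fun z _ => ?_
        rw [hF]
        simp only [hi, if_true]
        rw [pow_add]
        congr 1
        rw [← Finset.prod_pow_eq_pow_sum]
        rfl
      rw [this, if_pos hi, abs_mul, abs_of_nonneg (by positivity : (0:ℝ) ≤ (2:ℝ)^b)]
      exact mul_le_mul_of_nonneg_left (hδ (T i)) (by positivity)
    · have hTi : T i = ∅ := by
        rw [hT]
        simp only [Finset.filter_eq_empty_iff]
        intro j _
        by_contra h
        exact hi (hsupp i j h)
      have : (∑ z : Fin b → F2, F i z) = (2 : ℝ) ^ b := by
        have : ∀ z : Fin b → F2, F i z = 1 := by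
          intro z; rw [hF]; simp [hi, hTi]
        rw [Finset.sum_congr rfl fun z _ => this z, Finset.sum_const, Finset.card_univ]
        simp [Fintype.card_fun]
      rw [this, if_neg hi, mul_one, abs_of_nonneg (by positivity)]
  rw [step2, abs_mul, abs_inv, abs_pow, abs_two, Finset.abs_prod]
  have hprod : ∏ i : Fin n, |∑ z : Fin b → F2, F i z|
      ≤ ∏ i : Fin n, ((2 : ℝ) ^ b * (if i ∈ S then δ else 1)) :=
    Finset.prod_le_prod (fun i _ => abs_nonneg _) (fun i _ => hbound i)
  have heq : ∏ i : Fin n, ((2 : ℝ) ^ b * (if i ∈ S then δ else 1))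
      = (2 : ℝ) ^ (n * b) * δ ^ S.card := by
    rw [Finset.prod_mul_distrib, Finset.prod_const, Finset.prod_ite_mem, Finset.univ_inter,
      Finset.prod_const, Finset.card_univ, Fintype.card_fin, ← pow_mul, mul_comm b n]
  calc ((2 : ℝ) ^ (n * b))⁻¹ * ∏ i : Fin n, |∑ z : Fin b → F2, F i z|
      ≤ ((2 : ℝ) ^ (n * b))⁻¹ * ((2 : ℝ) ^ (n * b) * δ ^ S.card) := by
        refine mul_le_mul_of_nonneg_left ?_ (by positivity)
        rw [← heq]; exact hprod
    _ = δ ^ S.card := by rw [← mul_assoc, inv_mul_cancel₀ (by positivity), one_mul]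
end
end
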